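/- Every modular involutive quantaloid is weakly modular: for any two spans of left adjoints (f,g) : X ⇸ Y and (m,n) : X ⇸ Y (i.e. f, m have codomain Y and g, n have codomain X, with dom f = dom g and dom m = dom n, all four being left adjoints), one has (f∘g*) ∧ (m∘n*) ≤ f ∘ ((g*∘n) ∧ (f*∘m)) ∘ n*. -/

import Mathlib

/-!
Write `a°` for `inv a`. Applied to the involutes of its arguments, the modular law also holds on
the other side: `(a ≫ b) ⊓ h ≤ a ≫ (b ⊓ (a° ≫ h))`. Applying the modular law and then this dual
form to `(gs ≫ f) ⊓ (n° ≫ m)` gives the inequality with `n°` and `f°` in place of `ns` and `fs`,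
for an arbitrary `gs`. It remains that a left adjoint `p ⊣ q` has `p° = q`: by the unit,
`p° ≤ ((p° ≫ p) ≫ q) ⊓ p°`, which the modular law bounds by `((p° ≫ p) ⊓ (q ≫ p)°) ≫ q ≤ q`
using the counit; the same argument for the adjunction `q° ⊣ p°` gives `q ≤ p°`.
-/

open CategoryTheory

universe v u

theorem monotone_of_map_sSup {α β : Type*} [CompleteLattice α] [CompleteLattice β] {F : α → β}
    (hF : ∀ S : Set α, F (sSup S) = ⨆ x ∈ S, F x) : Monotone F := by
  intro a b hab
  calc F a ≤ ⨆ x ∈ ({a, b} : Set α), F x := le_biSup F (by simp)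
    _ = F b := by rw [← hF, sSup_pair, sup_eq_right.mpr hab]

section ModularInvolution

variable {Q : Type u} [Category.{v} Q] (inv : ∀ {X Y : Q}, (X ⟶ Y) → (Y ⟶ X))

theorem inv_id_of_involutive_contravariant
    (inv_inv : ∀ {X Y : Q} (f : X ⟶ Y), inv (inv f) = f)
    (inv_comp : ∀ {X Y Z : Q} (f : X ⟶ Y) (g : Y ⟶ Z), inv (f ≫ g) = inv g ≫ inv f) (X : Q) :
    inv (𝟙 X) = 𝟙 X :=
  calc inv (𝟙 X) = inv (𝟙 X) ≫ inv (inv (𝟙 X)) := by rw [inv_inv, Category.comp_id]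
    _ = 𝟙 X := by rw [← inv_comp, Category.comp_id, inv_inv]

variable [∀ X Y : Q, CompleteLattice (X ⟶ Y)]

def invOrderIso (inv_inv : ∀ {X Y : Q} (f : X ⟶ Y), inv (inv f) = f)
    (inv_sSup : ∀ {X Y : Q} (S : Set (X ⟶ Y)), inv (sSup S) = ⨆ f ∈ S, inv f) (X Y : Q) :
    (X ⟶ Y) ≃o (Y ⟶ X) where
  toFun := inv
  invFun := inv
  left_inv := inv_inv
  right_inv := inv_inv
  map_rel_iff' {a b} := by
    change inv a ≤ inv b ↔ a ≤ b
    refine ⟨fun h => ?_, fun h => monotone_of_map_sSup inv_sSup h⟩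
    simpa only [inv_inv] using monotone_of_map_sSup inv_sSup h

theorem comp_inf_le_comp_inf_inv_comp
    (inv_inv : ∀ {X Y : Q} (f : X ⟶ Y), inv (inv f) = f)
    (inv_comp : ∀ {X Y Z : Q} (f : X ⟶ Y) (g : Y ⟶ Z), inv (f ≫ g) = inv g ≫ inv f)
    (inv_sSup : ∀ {X Y : Q} (S : Set (X ⟶ Y)), inv (sSup S) = ⨆ f ∈ S, inv f)
    (modular : ∀ {X Y Z : Q} (f : X ⟶ Y) (g : Y ⟶ Z) (h : X ⟶ Z),
      (f ≫ g) ⊓ h ≤ (f ⊓ (h ≫ inv g)) ≫ g)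
    {X Y Z : Q} (a : X ⟶ Y) (b : Y ⟶ Z) (h : X ⟶ Z) :
    (a ≫ b) ⊓ h ≤ a ≫ (b ⊓ (inv a ≫ h)) := by
  have inv_inf {X Y : Q} (c d : X ⟶ Y) : inv (c ⊓ d) = inv c ⊓ inv d :=
    (invOrderIso inv inv_inv inv_sSup X Y).map_inf c d
  have hmod := monotone_of_map_sSup inv_sSup (modular (inv b) (inv a) (inv h))
  simpa only [inv_inf, inv_comp, inv_inv] using hmod

theorem inv_le_of_adjoint
    (sSup_comp : ∀ {X Y Z : Q} (S : Set (X ⟶ Y)) (g : Y ⟶ Z), sSup S ≫ g = ⨆ f ∈ S, f ≫ g)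
    (comp_sSup : ∀ {X Y Z : Q} (f : X ⟶ Y) (S : Set (Y ⟶ Z)), f ≫ sSup S = ⨆ g ∈ S, f ≫ g)
    (inv_inv : ∀ {X Y : Q} (f : X ⟶ Y), inv (inv f) = f)
    (inv_comp : ∀ {X Y Z : Q} (f : X ⟶ Y) (g : Y ⟶ Z), inv (f ≫ g) = inv g ≫ inv f)
    (inv_sSup : ∀ {X Y : Q} (S : Set (X ⟶ Y)), inv (sSup S) = ⨆ f ∈ S, inv f)
    (modular : ∀ {X Y Z : Q} (f : X ⟶ Y) (g : Y ⟶ Z) (h : X ⟶ Z),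
      (f ≫ g) ⊓ h ≤ (f ⊓ (h ≫ inv g)) ≫ g)
    {A B : Q} (p : A ⟶ B) (q : B ⟶ A) (unit : 𝟙 A ≤ p ≫ q) (counit : q ≫ p ≤ 𝟙 B) :
    inv p ≤ q := by
  have inv_p_le : inv p ≤ (inv p ≫ p) ≫ q :=
    calc inv p = inv p ≫ 𝟙 A := (Category.comp_id _).symm
      _ ≤ inv p ≫ p ≫ q := monotone_of_map_sSup (comp_sSup (inv p)) unit
      _ = (inv p ≫ p) ≫ q := (Category.assoc _ _ _).symm
  have inv_counit : inv p ≫ inv q ≤ 𝟙 B :=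
    calc inv p ≫ inv q = inv (q ≫ p) := (inv_comp q p).symm
      _ ≤ inv (𝟙 B) := monotone_of_map_sSup inv_sSup counit
      _ = 𝟙 B := inv_id_of_involutive_contravariant inv inv_inv inv_comp B
  calc inv p ≤ ((inv p ≫ p) ≫ q) ⊓ inv p := le_inf inv_p_le le_rfl
    _ ≤ ((inv p ≫ p) ⊓ (inv p ≫ inv q)) ≫ q := modular (inv p ≫ p) q (inv p)
    _ ≤ 𝟙 B ≫ q :=
      monotone_of_map_sSup (F := (· ≫ q)) (sSup_comp · q) (inf_le_right.trans inv_counit)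
    _ = q := Category.id_comp q

theorem inv_eq_of_adjoint
    (sSup_comp : ∀ {X Y Z : Q} (S : Set (X ⟶ Y)) (g : Y ⟶ Z), sSup S ≫ g = ⨆ f ∈ S, f ≫ g)
    (comp_sSup : ∀ {X Y Z : Q} (f : X ⟶ Y) (S : Set (Y ⟶ Z)), f ≫ sSup S = ⨆ g ∈ S, f ≫ g)
    (inv_inv : ∀ {X Y : Q} (f : X ⟶ Y), inv (inv f) = f)
    (inv_comp : ∀ {X Y Z : Q} (f : X ⟶ Y) (g : Y ⟶ Z), inv (f ≫ g) = inv g ≫ inv f)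
    (inv_sSup : ∀ {X Y : Q} (S : Set (X ⟶ Y)), inv (sSup S) = ⨆ f ∈ S, inv f)
    (modular : ∀ {X Y Z : Q} (f : X ⟶ Y) (g : Y ⟶ Z) (h : X ⟶ Z),
      (f ≫ g) ⊓ h ≤ (f ⊓ (h ≫ inv g)) ≫ g)
    {A B : Q} (p : A ⟶ B) (q : B ⟶ A) (unit : 𝟙 A ≤ p ≫ q) (counit : q ≫ p ≤ 𝟙 B) :
    inv p = q := by
  have inv_mono {X Y : Q} : Monotone (inv : (X ⟶ Y) → (Y ⟶ X)) := monotone_of_map_sSup inv_sSup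
  have inv_id := inv_id_of_involutive_contravariant inv inv_inv inv_comp
  have inv_unit : 𝟙 A ≤ inv q ≫ inv p := by
    simpa only [inv_id, inv_comp] using inv_mono unit
  have inv_counit : inv p ≫ inv q ≤ 𝟙 B := by
    simpa only [inv_id, inv_comp] using inv_mono counit
  refine le_antisymm
    (inv_le_of_adjoint inv sSup_comp comp_sSup inv_inv inv_comp inv_sSup modular p q unit counit) ?_
  simpa only [inv_inv] using inv_le_of_adjoint inv sSup_comp comp_sSup inv_inv inv_comp inv_sSup
    modular (inv q) (inv p) inv_unit inv_counit

theorem comp_inf_inv_comp_le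
    (sSup_comp : ∀ {X Y Z : Q} (S : Set (X ⟶ Y)) (g : Y ⟶ Z), sSup S ≫ g = ⨆ f ∈ S, f ≫ g)
    (inv_inv : ∀ {X Y : Q} (f : X ⟶ Y), inv (inv f) = f)
    (inv_comp : ∀ {X Y Z : Q} (f : X ⟶ Y) (g : Y ⟶ Z), inv (f ≫ g) = inv g ≫ inv f)
    (inv_sSup : ∀ {X Y : Q} (S : Set (X ⟶ Y)), inv (sSup S) = ⨆ f ∈ S, inv f)
    (modular : ∀ {X Y Z : Q} (f : X ⟶ Y) (g : Y ⟶ Z) (h : X ⟶ Z),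
      (f ≫ g) ⊓ h ≤ (f ⊓ (h ≫ inv g)) ≫ g)
    {X Y U V : Q} (f : U ⟶ Y) (m : V ⟶ Y) (n : V ⟶ X) (k : X ⟶ U) :
    (k ≫ f) ⊓ (inv n ≫ m) ≤ inv n ≫ (((n ≫ k) ⊓ (m ≫ inv f)) ≫ f) := by
  have dual := comp_inf_le_comp_inf_inv_comp inv inv_inv inv_comp inv_sSup modular
    (inv n) (m ≫ inv f) k
  rw [inv_inv] at dual
  calc (k ≫ f) ⊓ (inv n ≫ m) ≤ (k ⊓ ((inv n ≫ m) ≫ inv f)) ≫ f := modular k f _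
    _ = ((inv n ≫ m ≫ inv f) ⊓ k) ≫ f := by rw [Category.assoc, inf_comm]
    _ ≤ (inv n ≫ ((m ≫ inv f) ⊓ (n ≫ k))) ≫ f :=
      monotone_of_map_sSup (F := (· ≫ f)) (sSup_comp · f) dual
    _ = inv n ≫ (((n ≫ k) ⊓ (m ≫ inv f)) ≫ f) := by rw [inf_comm, Category.assoc]

end ModularInvolution

theorem stmt_2 {Q : Type u} [Category.{v} Q] [∀ X Y : Q, CompleteLattice (X ⟶ Y)]
    (sSup_comp : ∀ {X Y Z : Q} (S : Set (X ⟶ Y)) (g : Y ⟶ Z), sSup S ≫ g = ⨆ f ∈ S, f ≫ g)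
    (comp_sSup : ∀ {X Y Z : Q} (f : X ⟶ Y) (S : Set (Y ⟶ Z)), f ≫ sSup S = ⨆ g ∈ S, f ≫ g)
    (inv : ∀ {X Y : Q}, (X ⟶ Y) → (Y ⟶ X))
    (inv_inv : ∀ {X Y : Q} (f : X ⟶ Y), inv (inv f) = f)
    (inv_comp : ∀ {X Y Z : Q} (f : X ⟶ Y) (g : Y ⟶ Z), inv (f ≫ g) = inv g ≫ inv f)
    (inv_id : ∀ X : Q, inv (𝟙 X) = 𝟙 X)
    (inv_sSup : ∀ {X Y : Q} (S : Set (X ⟶ Y)), inv (sSup S) = ⨆ f ∈ S, inv f)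
    (modular : ∀ {X Y Z : Q} (f : X ⟶ Y) (g : Y ⟶ Z) (h : X ⟶ Z),
      (f ≫ g) ⊓ h ≤ (f ⊓ (h ≫ inv g)) ≫ g)
    {X Y U V : Q}
    (f : U ⟶ Y) (g : U ⟶ X) (m : V ⟶ Y) (n : V ⟶ X)
    (fs : Y ⟶ U) (gs : X ⟶ U) (ms : Y ⟶ V) (ns : X ⟶ V)
    (hf : 𝟙 U ≤ f ≫ fs ∧ fs ≫ f ≤ 𝟙 Y) (hg : 𝟙 U ≤ g ≫ gs ∧ gs ≫ g ≤ 𝟙 X)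
    (hm : 𝟙 V ≤ m ≫ ms ∧ ms ≫ m ≤ 𝟙 Y) (hn : 𝟙 V ≤ n ≫ ns ∧ ns ≫ n ≤ 𝟙 X) :
    (gs ≫ f) ⊓ (ns ≫ m) ≤ ns ≫ (((n ≫ gs) ⊓ (m ≫ fs)) ≫ f) := by
  obtain rfl := inv_eq_of_adjoint inv sSup_comp comp_sSup inv_inv inv_comp inv_sSup modular
    f fs hf.1 hf.2
  obtain rfl := inv_eq_of_adjoint inv sSup_comp comp_sSup inv_inv inv_comp inv_sSup modular
    n ns hn.1 hn.2
  exact comp_inf_inv_comp_le inv sSup_comp inv_inv inv_comp inv_sSup modular f m n gs
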